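/- The lattice Z of cyclic flats of a q-matroid (E,r) satisfies: (Z1) r(0_Z) = 0 where 0_Z = cl(0); (Z2) for F, G ∈ Z with G < F, 0 < r(F) - r(G) < dim(F) - dim(G); (Z3) for all F, G ∈ Z, r(F) + r(G) ≥ r(F ∨ G) + r(F ∧ G) + dim((F∩G)/(F∧G)). -/

import Mathlib

open Module Submodule

variable {K E : Type*} [Field K] [Fintype K] [AddCommGroup E] [Module K E]
  [FiniteDimensional K E]

/-- The dimension of a subspace, as an integer. -/
noncomputable def dimz {K E : Type*} [Field K] [AddCommGroup E] [Module K E]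
    (A : Submodule K E) : ℤ :=
  (Module.finrank K ↥A : ℤ)

/-- `r` is the rank function of a `q`-matroid on `E`: axioms (R1)-(R3). -/
def QMat {K E : Type*} [Field K] [AddCommGroup E] [Module K E]
    (r : Submodule K E → ℤ) : Prop :=
  (∀ A : Submodule K E, 0 ≤ r A ∧ r A ≤ dimz A) ∧
  (∀ A B : Submodule K E, A ≤ B → r A ≤ r B) ∧
  (∀ A B : Submodule K E, r (A ⊔ B) + r (A ⊓ B) ≤ r A + r B)

/-- A subspace is cyclic: every codimension-1 subspace has the same rank. -/
def QCyclic {K E : Type*} [Field K] [AddCommGroup E] [Module K E]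
    (r : Submodule K E → ℤ) (A : Submodule K E) : Prop :=
  ∀ B ≤ A, Module.finrank K ↥A = Module.finrank K ↥B + 1 → r B = r A

/-- The cyclic operator: sum of all one-dimensional `x ≤ A` with
`r (B ⊔ x) = r B` for all codimension-1 subspaces `B` of `A`. -/
noncomputable def qcyc {K E : Type*} [Field K] [AddCommGroup E] [Module K E]
    (r : Submodule K E → ℤ) (A : Submodule K E) : Submodule K E :=
  sSup {x : Submodule K E | x ≤ A ∧ Module.finrank K ↥x = 1 ∧
    ∀ B ≤ A, Module.finrank K ↥A = Module.finrank K ↥B + 1 → r (B ⊔ x) = r B}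

/-- The closure operator: sum of all one-dimensional `x` with `r (A ⊔ x) = r A`. -/
noncomputable def qcl {K E : Type*} [Field K] [AddCommGroup E] [Module K E]
    (r : Submodule K E → ℤ) (A : Submodule K E) : Submodule K E :=
  sSup {x : Submodule K E | Module.finrank K ↥x = 1 ∧ r (A ⊔ x) = r A}

/-- A subspace `F` is a flat: adding any one-dimensional space outside `F`
increases the rank. -/
def QFlat {K E : Type*} [Field K] [AddCommGroup E] [Module K E]
    (r : Submodule K E → ℤ) (F : Submodule K E) : Prop :=
  ∀ x : Submodule K E, Module.finrank K ↥x = 1 → ¬ x ≤ F → r F < r (F ⊔ x)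

/-!
Closure preserves rank, since the spaces `X ≥ A` with `r X = r A` are closed under `⊔` by
submodularity; this gives (Z1). Submodularity against a complement shows that the rank grows by
at most the dimension, and applied to a hyperplane of `F` containing `G` (which has the rank of
`F`, as `F` is cyclic) this gives the upper bound in (Z2); the lower bound is flatness of `G`.
For (Z3), `cyc A` is the intersection of `A` with the hyperplanes `B` of `A` with `r B ≠ r A`.
Cutting `A` down to `cyc A` by such hyperplanes one at a time lowers the dimension by one and the
rank by at least one at each step, so `r (cyc A) + dim A - dim (cyc A) ≤ r A`; together with
`r (cl X) = r X` and submodularity for `F, G` this is (Z3).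
-/

section

variable {K E : Type*} [Field K] [AddCommGroup E] [Module K E] {r : Submodule K E → ℤ}
  {A B D F G : Submodule K E}

theorem CovBy.sup_eq_of_not_le {α : Type*} [Lattice α] {a b c : α} (h : a ⋖ b) (hcb : c ≤ b)
    (hca : ¬ c ≤ a) : a ⊔ c = b :=
  (h.eq_or_eq le_sup_left (sup_le h.le hcb)).resolve_left fun heq => hca (heq ▸ le_sup_right)

namespace QMat

variable (hM : QMat r)
include hM

theorem rank_nonneg (A : Submodule K E) : 0 ≤ r A := (hM.1 A).1

theorem rank_le_dimz (A : Submodule K E) : r A ≤ dimz A := (hM.1 A).2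

theorem rank_mono (h : A ≤ B) : r A ≤ r B := hM.2.1 A B h

theorem rank_sup_add_rank_inf_le (A B : Submodule K E) : r (A ⊔ B) + r (A ⊓ B) ≤ r A + r B :=
  hM.2.2 A B

theorem rank_bot : r ⊥ = 0 :=
  le_antisymm (by simpa [dimz] using hM.rank_le_dimz ⊥) (hM.rank_nonneg ⊥)

theorem rank_sup_sup_eq (hB : r (A ⊔ B) = r A) (hD : r (A ⊔ D) = r A) :
    r (A ⊔ (B ⊔ D)) = r A := by
  have hsub := hM.rank_sup_add_rank_inf_le (A ⊔ B) (A ⊔ D)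
  rw [sup_sup_sup_comm, sup_idem, hB, hD] at hsub
  have := hM.rank_mono (le_inf (le_sup_left : A ≤ A ⊔ B) (le_sup_left : A ≤ A ⊔ D))
  have := hM.rank_mono (le_sup_left : A ≤ A ⊔ (B ⊔ D))
  omega

theorem rank_inf_add_one_le (hBA : B ⋖ A) (hr : r B ≠ r A) (hDA : D ≤ A) (hDB : ¬ D ≤ B) :
    r (B ⊓ D) + 1 ≤ r D := by
  have hsub := hM.rank_sup_add_rank_inf_le B D
  rw [hBA.sup_eq_of_not_le hDA hDB] at hsub
  have := hM.rank_mono hBA.le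
  omega

end QMat

theorem le_qcl (r : Submodule K E → ℤ) (A : Submodule K E) : A ≤ qcl r A := by
  intro v hv
  by_cases hv0 : v = 0
  · simp [hv0]
  refine le_sSup (?_ : span K {v} ∈ _) (mem_span_singleton_self v)
  exact ⟨finrank_span_singleton hv0, by rw [sup_eq_left.2 ((span_singleton_le_iff_mem v A).2 hv)]⟩

theorem qcyc_le_self (r : Submodule K E → ℤ) (A : Submodule K E) : qcyc r A ≤ A :=
  sSup_le fun _ hx => hx.1

theorem QFlat.rank_lt_of_lt (hM : QMat r) (hG : QFlat r G) (hGF : G < F) : r G < r F := by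
  obtain ⟨v, hvF, hvG⟩ := SetLike.exists_of_lt hGF
  have hv0 : v ≠ 0 := fun h => hvG (h ▸ G.zero_mem)
  have hvG' : ¬ span K {v} ≤ G := fun hle => hvG (hle (mem_span_singleton_self v))
  calc r G < r (G ⊔ span K {v}) := hG _ (finrank_span_singleton hv0) hvG'
    _ ≤ r F := hM.rank_mono (sup_le hGF.le ((span_singleton_le_iff_mem v F).2 hvF))

variable [FiniteDimensional K E]

theorem Submodule.covBy_iff_finrank_eq_add_one :
    B ⋖ A ↔ B ≤ A ∧ finrank K A = finrank K B + 1 := by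
  constructor
  · intro h
    obtain ⟨v, hvA, hvB⟩ := SetLike.exists_of_lt h.lt
    have hsup : B ⊔ span K {v} = A :=
      h.sup_eq_of_not_le ((span_singleton_le_iff_mem v A).2 hvA)
        fun hle => hvB (hle (mem_span_singleton_self v))
    exact ⟨h.le, hsup ▸ finrank_sup_span_singleton hvB⟩
  · rintro ⟨hle, hdim⟩
    refine ⟨lt_of_le_of_ne hle ?_, fun C hBC hCA => ?_⟩
    · rintro rfl
      omega
    · have := finrank_lt_finrank_of_lt hBC
      have := finrank_lt_finrank_of_lt hCA
      omega

theorem dimz_eq_add_one_of_covBy (h : B ⋖ A) : dimz A = dimz B + 1 := by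
  simp [dimz, (covBy_iff_finrank_eq_add_one.1 h).2]

theorem qcyc_le_of_covBy (hBA : B ⋖ A) (hr : r B ≠ r A) : qcyc r A ≤ B := by
  refine sSup_le fun x hx => ?_
  by_contra hxB
  have := hx.2.2 B hBA.le (covBy_iff_finrank_eq_add_one.1 hBA).2
  rw [hBA.sup_eq_of_not_le hx.1 hxB] at this
  exact hr this.symm

theorem le_qcyc_iff : D ≤ qcyc r A ↔ D ≤ A ∧ ∀ B, B ⋖ A → r B ≠ r A → D ≤ B := by
  refine ⟨fun h => ⟨h.trans (qcyc_le_self r A), fun B hBA hr => h.trans (qcyc_le_of_covBy hBA hr)⟩,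
    fun ⟨hDA, hD⟩ v hv => ?_⟩
  by_cases hv0 : v = 0
  · simp [hv0]
  have hvA : span K {v} ≤ A := (span_singleton_le_iff_mem v A).2 (hDA hv)
  refine le_sSup (?_ : span K {v} ∈ _) (mem_span_singleton_self v)
  refine ⟨hvA, finrank_span_singleton hv0, fun B hBA hdim => ?_⟩
  have hBA' : B ⋖ A := covBy_iff_finrank_eq_add_one.2 ⟨hBA, hdim⟩
  by_cases hvB : v ∈ B
  · rw [sup_eq_left.2 ((span_singleton_le_iff_mem v B).2 hvB)]
  rw [hBA'.sup_eq_of_not_le hvA fun hle => hvB (hle (mem_span_singleton_self v))]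
  by_contra hr
  exact hvB (hD B hBA' (Ne.symm hr) hv)

namespace QMat

variable (hM : QMat r)
include hM

theorem rank_sub_rank_le (hAB : A ≤ B) : r B - r A ≤ dimz B - dimz A := by
  obtain ⟨C', hC'⟩ := Submodule.exists_isCompl A
  have hsup : A ⊔ C' ⊓ B = B := by rw [← sup_inf_assoc_of_le C' hAB, hC'.sup_eq_top, top_inf_eq]
  have hinf : A ⊓ (C' ⊓ B) = ⊥ := eq_bot_iff.2 (hC'.inf_eq_bot ▸ inf_le_inf_left A inf_le_left)
  have hdim := finrank_sup_add_finrank_inf_eq A (C' ⊓ B)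
  rw [hsup, hinf, finrank_bot] at hdim
  have hsub := hM.rank_sup_add_rank_inf_le A (C' ⊓ B)
  rw [hsup, hinf, hM.rank_bot] at hsub
  have := hM.rank_le_dimz (C' ⊓ B)
  simp only [dimz] at this ⊢
  omega

theorem rank_sup_sSup_eq {S : Set (Submodule K E)} (hS : ∀ X ∈ S, r (A ⊔ X) = r A) :
    r (A ⊔ sSup S) = r A := by
  obtain ⟨t, htS, hsup⟩ := CompleteLattice.WellFoundedGT.isSupFiniteCompact _ S
  rw [hsup]
  exact Finset.sup_induction (p := fun X => r (A ⊔ X) = r A) (by simp)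
    (fun _ hX _ hY => hM.rank_sup_sup_eq hX hY) fun X hX => hS X (htS hX)

theorem rank_qcl (A : Submodule K E) : r (qcl r A) = r A :=
  calc r (qcl r A) = r (A ⊔ qcl r A) := by rw [sup_eq_right.2 (le_qcl r A)]
    _ = r A := hM.rank_sup_sSup_eq fun _ hx => hx.2

theorem rank_qcyc_add_le_of_le (hCD : qcyc r A ≤ D) (hDA : D ≤ A) :
    r (qcyc r A) + (dimz D - dimz (qcyc r A)) ≤ r D := by
  induction D using WellFoundedLT.induction with
  | _ D ih =>
  by_cases hDC : D ≤ qcyc r A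
  · rw [le_antisymm hDC hCD]
    omega
  obtain ⟨B, hBA, hr, hDB⟩ : ∃ B, B ⋖ A ∧ r B ≠ r A ∧ ¬ D ≤ B := by
    by_contra! h
    exact hDC (le_qcyc_iff.2 ⟨hDA, h⟩)
  have hcov : B ⊓ D ⋖ D := inf_covBy_of_covBy_sup_left (hBA.sup_eq_of_not_le hDA hDB ▸ hBA)
  have := ih (B ⊓ D) hcov.lt (le_inf (qcyc_le_of_covBy hBA hr) hCD) (inf_le_right.trans hDA)
  have := dimz_eq_add_one_of_covBy hcov
  have := hM.rank_inf_add_one_le hBA hr hDA hDB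
  omega

theorem rank_qcyc_add_le (A : Submodule K E) :
    r (qcyc r A) + (dimz A - dimz (qcyc r A)) ≤ r A :=
  hM.rank_qcyc_add_le_of_le (qcyc_le_self r A) le_rfl

end QMat

theorem QCyclic.rank_sub_lt (hM : QMat r) (hF : QCyclic r F) (hGF : G < F) :
    r F - r G < dimz F - dimz G := by
  obtain ⟨B, hGB, hBF⟩ := exists_le_covBy_of_lt hGF
  have hrB : r B = r F := hF B hBF.le (covBy_iff_finrank_eq_add_one.1 hBF).2
  have := hM.rank_sub_rank_le hGB
  have := dimz_eq_add_one_of_covBy hBF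
  omega

end

/-- the lattice of cyclic flats satisfies (Z1)-(Z3). -/
theorem cyclic_flats_Z_axioms (r : Submodule K E → ℤ) (hM : QMat r) :
    r (qcl r ⊥) = 0 ∧
    (∀ F G : Submodule K E, QFlat r F → QCyclic r F → QFlat r G → QCyclic r G →
      G < F → 0 < r F - r G ∧ r F - r G < dimz F - dimz G) ∧
    (∀ F G : Submodule K E, QFlat r F → QCyclic r F → QFlat r G → QCyclic r G →
      r (qcl r (F ⊔ G)) + r (qcyc r (F ⊓ G)) +
        (dimz (F ⊓ G) - dimz (qcyc r (F ⊓ G))) ≤ r F + r G) := by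
  refine ⟨by rw [hM.rank_qcl, hM.rank_bot], ?_, ?_⟩
  · intro F G _ hF hG _ hGF
    exact ⟨sub_pos.2 (hG.rank_lt_of_lt hM hGF), hF.rank_sub_lt hM hGF⟩
  · intro F G _ _ _ _
    have := hM.rank_qcyc_add_le (F ⊓ G)
    have := hM.rank_sup_add_rank_inf_le F G
    rw [hM.rank_qcl]
    omega
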